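/- Define c_{mn} recursively by c_{-1,-1} = 0, c_{-1,k} = c_{k,-1} = 1 for k ≥ 0, and c_{mn} = Σ_{i=0}^m Σ_{j=0}^n z̃^{mn}_{ij} c_{i-1,j-1}, where z̃^{mn}_{ij} = π_i^m π_j^n for 0 ≤ i ≤ m < j ≤ n, z̃^{mn}_{ii} = π_i^n for 0 ≤ i ≤ m, and z̃^{mn}_{ij} = 0 otherwise. Then the plan z̃^{mn} is a feasible transport plan between π^m and π^n, and consequently d_{mn} ≤ c_{mn} for all m, n. -/

import Mathlib

open Finset

/-- `kmPi α i n` is `π_i^n = α_i ∏_{k=i+1}^n (1 - α_k)` (empty product = 1). -/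
noncomputable def kmPi (α : ℕ → ℝ) (i n : ℕ) : ℝ :=
  α i * ∏ k ∈ Finset.Icc (i + 1) n, (1 - α k)
/-- A feasible transport plan between the probability vectors `π^m` and `π^n`. -/
def IsPlan (α : ℕ → ℝ) (m n : ℕ) (z : ℕ → ℕ → ℝ) : Prop :=
  (∀ i ≤ m, ∀ j ≤ n, 0 ≤ z i j) ∧
  (∀ i ≤ m, ∑ j ∈ Finset.range (n + 1), z i j = kmPi α i m) ∧
  (∀ j ≤ n, ∑ i ∈ Finset.range (m + 1), z i j = kmPi α j n)

/-- Transport cost `Σ_{i=0}^m Σ_{j=0}^n z_{ij} d_{i-1,j-1}`, where indices of `D` are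
shifted by one: `D i j` stands for `d_{i-1,j-1}`. -/
noncomputable def planCost (D : ℕ → ℕ → ℝ) (m n : ℕ) (z : ℕ → ℕ → ℝ) : ℝ :=
  ∑ i ∈ Finset.range (m + 1), ∑ j ∈ Finset.range (n + 1), z i j * D i j

/-- `D : ℕ → ℕ → ℝ` encodes the family `d_{mn}` for `m, n ∈ {-1,0,1,...}` with indices
shifted by one: `D (m+1) (n+1) = d_{m,n}`, `D 0 (k+1) = d_{-1,k}`, etc.  It is the
recursive optimal-transport family: boundary values `d_{-1,-1} = 0`,
`d_{-1,k} = d_{k,-1} = 1`, and `d_{mn}` is the minimum transport cost between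
`π^m` and `π^n` (the minimum, i.e. attained greatest lower bound). -/
def IsKMDist (α : ℕ → ℝ) (D : ℕ → ℕ → ℝ) : Prop :=
  D 0 0 = 0 ∧ (∀ k : ℕ, D 0 (k + 1) = 1) ∧ (∀ k : ℕ, D (k + 1) 0 = 1) ∧
  ∀ m n : ℕ,
    IsLeast {c : ℝ | ∃ z : ℕ → ℕ → ℝ, IsPlan α m n z ∧ c = planCost D m n z}
      (D (m + 1) (n + 1))
/-- The sub-optimal product transport plan between `π^m` and `π^n` (for `m ≤ n`):
`z̃_{ii} = π_i^n` for `i ≤ m`, `z̃_{ij} = π_i^m π_j^n` for `i ≤ m < j ≤ n`, else `0`. -/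
noncomputable def ztilde (α : ℕ → ℝ) (m n : ℕ) (i j : ℕ) : ℝ :=
  if i = j ∧ i ≤ m then kmPi α i n
  else if i ≤ m ∧ m < j ∧ j ≤ n then kmPi α i m * kmPi α j n
  else 0

/-!
The plan `z̃^{mn}` keeps the mass `π_i^n = π_i^m ∏_{k=m+1}^n (1 - α_k)` of each `i ≤ m` in
place and spreads the rest of `π_i^m` over the new points `m < j ≤ n` in proportion to
`π_j^n`; since `∑_{m<j≤n} π_j^n = 1 - ∏_{k=m+1}^n (1 - α_k)`, the marginals come out right.
The plan only moves mass from `i` to some `j ≥ i`, so by strong induction on `i` the cost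
`c_{i-1,j-1}` of every transport it uses already dominates `d_{i-1,j-1}`, and the
minimality of `d_{mn}` gives `d_{mn} ≤ Σ z̃_{ij} d_{i-1,j-1} ≤ Σ z̃_{ij} c_{i-1,j-1} = c_{mn}`.
-/

section kmPi

variable {α : ℕ → ℝ}

lemma kmPi_nonneg (hα : ∀ k, α k ∈ Set.Icc (0 : ℝ) 1) (i n : ℕ) : 0 ≤ kmPi α i n :=
  mul_nonneg (hα i).1 (prod_nonneg fun k _ => sub_nonneg.2 (hα k).2)

lemma kmPi_eq_mul_prod {j m n : ℕ} (hjm : j ≤ m) (hmn : m ≤ n) :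
    kmPi α j n = kmPi α j m * ∏ k ∈ Icc (m + 1) n, (1 - α k) := by
  simp only [kmPi, mul_assoc, Icc_add_one_left_eq_Ioc, prod_Ioc_consecutive _ hjm hmn]

lemma sum_kmPi (hα0 : α 0 = 1) (n : ℕ) : ∑ i ∈ range (n + 1), kmPi α i n = 1 := by
  induction n with
  | zero => simp [kmPi, hα0]
  | succ n ih =>
    have hstep : ∀ i ∈ range (n + 1), kmPi α i (n + 1) = kmPi α i n * (1 - α (n + 1)) :=
      fun i hi => by
        rw [kmPi_eq_mul_prod (Nat.lt_succ_iff.1 (mem_range.1 hi)) n.le_succ, Icc_self,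
          prod_singleton]
    rw [sum_range_succ, sum_congr rfl hstep, ← sum_mul, ih]
    simp [kmPi]

lemma sum_range_kmPi_eq_prod (hα0 : α 0 = 1) {m n : ℕ} (hmn : m ≤ n) :
    ∑ j ∈ range (m + 1), kmPi α j n = ∏ k ∈ Icc (m + 1) n, (1 - α k) := by
  rw [sum_congr rfl fun j hj => kmPi_eq_mul_prod (Nat.lt_succ_iff.1 (mem_range.1 hj)) hmn,
    ← sum_mul, sum_kmPi hα0, one_mul]

lemma sum_Ico_kmPi (hα0 : α 0 = 1) {m n : ℕ} (hmn : m ≤ n) :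
    ∑ j ∈ Ico (m + 1) (n + 1), kmPi α j n = 1 - ∏ k ∈ Icc (m + 1) n, (1 - α k) := by
  refine eq_sub_of_add_eq' ?_
  rw [← sum_range_kmPi_eq_prod hα0 hmn, sum_range_add_sum_Ico _ (Nat.succ_le_succ hmn),
    sum_kmPi hα0]

end kmPi

section ztilde

variable {α : ℕ → ℝ} {m n i j : ℕ}

lemma ztilde_nonneg (hα : ∀ k, α k ∈ Set.Icc (0 : ℝ) 1) (m n i j : ℕ) :
    0 ≤ ztilde α m n i j := by
  unfold ztilde
  split_ifs
  · exact kmPi_nonneg hα _ _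
  · exact mul_nonneg (kmPi_nonneg hα _ _) (kmPi_nonneg hα _ _)
  · exact le_rfl

lemma le_of_ztilde_ne_zero (h : ztilde α m n i j ≠ 0) : i ≤ j := by
  unfold ztilde at h
  split_ifs at h with hdiag hnew
  · exact hdiag.1.le
  · omega
  · exact absurd rfl h

lemma sum_ztilde_row (hα0 : α 0 = 1) (hmn : m ≤ n) (hi : i ≤ m) :
    ∑ j ∈ range (n + 1), ztilde α m n i j = kmPi α i m := by
  have hdiag : ∑ j ∈ range (m + 1), ztilde α m n i j = kmPi α i n := by
    rw [sum_eq_single_of_mem i (mem_range.2 (Nat.lt_succ_of_le hi))]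
    · simp [ztilde, hi]
    · intro j hj hji
      have : j ≤ m := Nat.lt_succ_iff.1 (mem_range.1 hj)
      simp [ztilde, Ne.symm hji, Nat.not_lt.2 this]
  have hnew : ∑ j ∈ Ico (m + 1) (n + 1), ztilde α m n i j
      = kmPi α i m * ∑ j ∈ Ico (m + 1) (n + 1), kmPi α j n := by
    rw [mul_sum]
    refine sum_congr rfl fun j hj => ?_
    obtain ⟨hmj, hjn⟩ := mem_Ico.1 hj
    have hij : i ≠ j := by omega
    simp [ztilde, hij, hi, Nat.succ_le_iff.1 hmj, Nat.lt_succ_iff.1 hjn]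
  rw [← sum_range_add_sum_Ico _ (Nat.succ_le_succ hmn), hdiag, hnew, sum_Ico_kmPi hα0 hmn,
    kmPi_eq_mul_prod hi hmn]
  ring

lemma sum_ztilde_col (hα0 : α 0 = 1) (hj : j ≤ n) :
    ∑ i ∈ range (m + 1), ztilde α m n i j = kmPi α j n := by
  rcases Nat.lt_or_ge m j with hmj | hjm
  · have hprod : ∀ i ∈ range (m + 1), ztilde α m n i j = kmPi α i m * kmPi α j n := by
      intro i hi
      have him : i ≤ m := Nat.lt_succ_iff.1 (mem_range.1 hi)
      have hij : i ≠ j := by omega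
      simp [ztilde, hij, him, hmj, hj]
    rw [sum_congr rfl hprod, ← sum_mul, sum_kmPi hα0, one_mul]
  · rw [sum_eq_single_of_mem j (mem_range.2 (Nat.lt_succ_of_le hjm))]
    · simp [ztilde, hjm]
    · intro i _ hij
      simp [ztilde, hij, Nat.not_lt.2 hjm]

lemma ztilde_isPlan (hα0 : α 0 = 1) (hα : ∀ k, α k ∈ Set.Icc (0 : ℝ) 1) (hmn : m ≤ n) :
    IsPlan α m n (ztilde α m n) :=
  ⟨fun i _ j _ => ztilde_nonneg hα m n i j, fun _ hi => sum_ztilde_row hα0 hmn hi,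
    fun _ hj => sum_ztilde_col hα0 hj⟩

end ztilde

lemma planCost_mono {D E z : ℕ → ℕ → ℝ} {m n : ℕ} (hz : ∀ i ≤ m, ∀ j ≤ n, 0 ≤ z i j)
    (hDE : ∀ i ≤ m, ∀ j ≤ n, z i j ≠ 0 → D i j ≤ E i j) :
    planCost D m n z ≤ planCost E m n z := by
  refine sum_le_sum fun i hi => sum_le_sum fun j hj => ?_
  have hi : i ≤ m := Nat.lt_succ_iff.1 (mem_range.1 hi)
  have hj : j ≤ n := Nat.lt_succ_iff.1 (mem_range.1 hj)
  by_cases hzij : z i j = 0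
  · simp [hzij]
  · exact mul_le_mul_of_nonneg_left (hDE i hi j hj hzij) (hz i hi j hj)

theorem IsKMDist.le_of_isPlan {α : ℕ → ℝ} {D : ℕ → ℕ → ℝ} {c : ℕ → ℕ → ℝ}
    (hD : IsKMDist α D) (hc00 : c 0 0 = 0) (hc0 : ∀ k : ℕ, c 0 (k + 1) = 1)
    (z : ℕ → ℕ → ℕ → ℕ → ℝ) (hz : ∀ m n, m ≤ n → IsPlan α m n (z m n))
    (hz_upper : ∀ m n i j, z m n i j ≠ 0 → i ≤ j)
    (hcrec : ∀ m n, m ≤ n → c (m + 1) (n + 1) = planCost c m n (z m n)) :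
    ∀ i j, i ≤ j → D i j ≤ c i j := by
  obtain ⟨hD00, hD0, -, hDmin⟩ := hD
  intro i
  induction i using Nat.strong_induction_on with
  | _ i ih =>
  intro j hij
  rcases i with _ | m
  · rcases j with _ | k
    · rw [hD00, hc00]
    · rw [hD0, hc0]
  obtain ⟨n, rfl⟩ : ∃ n, j = n + 1 := Nat.exists_eq_succ_of_ne_zero (by omega)
  have hmn : m ≤ n := by omega
  calc D (m + 1) (n + 1) ≤ planCost D m n (z m n) := (hDmin m n).2 ⟨_, hz m n hmn, rfl⟩
    _ ≤ planCost c m n (z m n) := planCost_mono (hz m n hmn).1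
        fun i hi j _ hzij => ih i (by omega) j (hz_upper m n i j hzij)
    _ = c (m + 1) (n + 1) := (hcrec m n hmn).symm

theorem km_c_dominates_d_general (α : ℕ → ℝ) (hα0 : α 0 = 1)
    (hα : ∀ n, 1 ≤ n → α n ∈ Set.Ioo (0 : ℝ) 1)
    (D : ℕ → ℕ → ℝ) (hD : IsKMDist α D)
    (c : ℕ → ℕ → ℝ) (hc00 : c 0 0 = 0)
    (hc0 : ∀ k : ℕ, c 0 (k + 1) = 1)
    (hcrec : ∀ m n : ℕ, m ≤ n →
      c (m + 1) (n + 1) = planCost c m n (ztilde α m n)) :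
    (∀ m n : ℕ, m ≤ n → IsPlan α m n (ztilde α m n)) ∧
    (∀ m n : ℕ, m ≤ n → D (m + 1) (n + 1) ≤ c (m + 1) (n + 1)) := by
  have hα01 : ∀ k, α k ∈ Set.Icc (0 : ℝ) 1 := by
    rintro (_ | k)
    · simp [hα0]
    · exact Set.Ioo_subset_Icc_self (hα _ k.succ_pos)
  have hplan : ∀ m n, m ≤ n → IsPlan α m n (ztilde α m n) :=
    fun _ _ hmn => ztilde_isPlan hα0 hα01 hmn
  refine ⟨hplan, fun m n hmn => ?_⟩
  have hupper : ∀ m n i j, ztilde α m n i j ≠ 0 → i ≤ j := fun _ _ _ _ => le_of_ztilde_ne_zero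
  exact hD.le_of_isPlan hc00 hc0 (ztilde α) hplan hupper hcrec _ _ (by omega)

/-- the recursion `c_{mn} = Σ_{ij} z̃^{mn}_{ij} c_{i-1,j-1}` (with the
same boundary values as `d`, indices shifted by one) uses a feasible transport plan
`z̃^{mn}`, and consequently `d_{mn} ≤ c_{mn}` for all `m ≤ n`. -/
theorem km_c_dominates_d (α : ℕ → ℝ) (hα0 : α 0 = 1)
    (hα : ∀ n, 1 ≤ n → α n ∈ Set.Ioo (0 : ℝ) 1)
    (D : ℕ → ℕ → ℝ) (hD : IsKMDist α D)
    (c : ℕ → ℕ → ℝ) (hc00 : c 0 0 = 0)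
    (hc0 : ∀ k : ℕ, c 0 (k + 1) = 1) (hc0' : ∀ k : ℕ, c (k + 1) 0 = 1)
    (hcrec : ∀ m n : ℕ, m ≤ n →
      c (m + 1) (n + 1) = planCost c m n (ztilde α m n)) :
    (∀ m n : ℕ, m ≤ n → IsPlan α m n (ztilde α m n)) ∧
    (∀ m n : ℕ, m ≤ n → D (m + 1) (n + 1) ≤ c (m + 1) (n + 1)) :=
  km_c_dominates_d_general α hα0 hα D hD c hc00 hc0 hcrec
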